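/- arXiv:2605.31254 — 4 statements merged into one kernel-verified Lean document; each statement's English description precedes it below -/
import Mathlib

section
/- Let L_1,...,L_m be nonnegative random variables such that for each j, conditional on L_1,...,L_{j-1}, the variable L_j satisfies P(L_j ≥ c | L_1,...,L_{j-1}) ≤ e^{-c} for all c ≥ 0. Then the sum L = L_1 + ... + L_m satisfies P(L ≥ c) ≤ e^{-c} · sum_{i=0}^{m-1} c^i / i! for all c > 0. -/
open MeasureTheory Finset

section Aux

variable {Ω : Type*} [mΩ : MeasurableSpace Ω] {μ : Measure Ω} [IsProbabilityMeasure μ]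

/-- Simple-function version of the conditional domination bound. -/
lemma aux_simple (F : MeasurableSpace Ω) (hF : F ≤ mΩ) (X : Ω → ℝ)
    (hcond : ∀ c : ℝ, 0 ≤ c → ∀ A : Set Ω, MeasurableSet[F] A →
      μ ({ω | c ≤ X ω} ∩ A) ≤ ENNReal.ofReal (Real.exp (-c)) * μ A)
    (φ : @SimpleFunc Ω F ℝ) (hφ : ∀ ω, 0 ≤ φ ω) :
    μ {ω | φ ω ≤ X ω} ≤ ∫⁻ ω, ENNReal.ofReal (Real.exp (-φ ω)) ∂μ := by
  classical
  have hcover : {ω | φ ω ≤ X ω} = ⋃ y ∈ φ.range, ({ω | y ≤ X ω} ∩ φ ⁻¹' {y}) := by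
    ext ω
    simp only [Set.mem_setOf_eq, Set.mem_iUnion, Set.mem_inter_iff, Set.mem_preimage,
      Set.mem_singleton_iff]
    constructor
    · intro h; exact ⟨φ ω, φ.mem_range_self ω, h, rfl⟩
    · rintro ⟨y, _, h, rfl⟩; exact h
  rw [hcover]
  refine (measure_biUnion_finset_le _ _).trans ?_
  have hint : ∫⁻ ω, ENNReal.ofReal (Real.exp (-φ ω)) ∂μ
      = ∑ y ∈ φ.range, ENNReal.ofReal (Real.exp (-y)) * μ (φ ⁻¹' {y}) := by
    have hpt : ∀ ω, ENNReal.ofReal (Real.exp (-φ ω))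
        = ∑ y ∈ φ.range, Set.indicator (φ ⁻¹' {y}) (fun _ => ENNReal.ofReal (Real.exp (-y))) ω := by
      intro ω
      rw [Finset.sum_eq_single (φ ω)]
      · simp [Set.indicator_apply]
      · intro y _ hy
        simp [Set.indicator_apply, Set.mem_preimage, Ne.symm hy]
      · intro h; exact absurd (φ.mem_range_self ω) h
    calc ∫⁻ ω, ENNReal.ofReal (Real.exp (-φ ω)) ∂μ
        = ∫⁻ ω, ∑ y ∈ φ.range, Set.indicator (φ ⁻¹' {y})
            (fun _ => ENNReal.ofReal (Real.exp (-y))) ω ∂μ := by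
          exact lintegral_congr hpt
      _ = ∑ y ∈ φ.range, ∫⁻ ω, Set.indicator (φ ⁻¹' {y})
            (fun _ => ENNReal.ofReal (Real.exp (-y))) ω ∂μ := by
          refine lintegral_finset_sum _ fun y _ => ?_
          exact Measurable.indicator measurable_const (hF _ (φ.measurableSet_fiber y))
      _ = ∑ y ∈ φ.range, ENNReal.ofReal (Real.exp (-y)) * μ (φ ⁻¹' {y}) := by
          refine Finset.sum_congr rfl fun y _ => ?_
          exact lintegral_indicator_const (hF _ (φ.measurableSet_fiber y)) _
  rw [hint]
  refine Finset.sum_le_sum fun y hy => ?_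
  obtain ⟨ω₀, rfl⟩ := SimpleFunc.mem_range.1 hy
  exact hcond _ (hφ ω₀) _ (φ.measurableSet_fiber _)

/-- Measurable-function version, by approximation with simple functions. -/
lemma aux_meas (F : MeasurableSpace Ω) (hF : F ≤ mΩ) (X : Ω → ℝ)
    (hcond : ∀ c : ℝ, 0 ≤ c → ∀ A : Set Ω, MeasurableSet[F] A →
      μ ({ω | c ≤ X ω} ∩ A) ≤ ENNReal.ofReal (Real.exp (-c)) * μ A)
    (g : Ω → ℝ) (hg : Measurable[F] g) (hg0 : ∀ ω, 0 ≤ g ω) :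
    μ {ω | g ω ≤ X ω} ≤ ∫⁻ ω, ENNReal.ofReal (Real.exp (-g ω)) ∂μ := by
  classical
  set G : Ω → ENNReal := fun ω => ENNReal.ofReal (g ω) with hG
  have hGmeas : Measurable[F] G := ENNReal.measurable_ofReal.comp hg
  set ea : ℕ → @SimpleFunc Ω F ENNReal := @SimpleFunc.eapprox Ω F G with hea
  set ψ : ℕ → @SimpleFunc Ω F ℝ :=
    fun n => (ea n).map ENNReal.toReal with hψ
  have hψ_apply : ∀ n ω, ψ n ω = (ea n ω).toReal := fun n ω => rfl
  have hψ0 : ∀ n ω, 0 ≤ ψ n ω := by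
    intro n ω; rw [hψ_apply]; exact ENNReal.toReal_nonneg
  have heapprox_le : ∀ n ω, ea n ω ≤ G ω := by
    intro n ω
    rw [hea, ← SimpleFunc.iSup_eapprox_apply hGmeas ω]
    exact le_iSup (fun n => @SimpleFunc.eapprox Ω F G n ω) n
  have hψle : ∀ n ω, ψ n ω ≤ g ω := by
    intro n ω
    have := heapprox_le n ω
    calc (ψ n) ω = (ea n ω).toReal := hψ_apply n ω
      _ ≤ (G ω).toReal := ENNReal.toReal_mono ENNReal.ofReal_ne_top this
      _ = g ω := ENNReal.toReal_ofReal (hg0 ω)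
  have htendsto : ∀ ω, Filter.Tendsto (fun n => ψ n ω) Filter.atTop (nhds (g ω)) := by
    intro ω
    have h1 : Filter.Tendsto (fun n => ea n ω)
        Filter.atTop (nhds (G ω)) := by
      rw [hea]
      rw [← SimpleFunc.iSup_eapprox_apply hGmeas ω]
      exact tendsto_atTop_iSup (fun a b hab => SimpleFunc.monotone_eapprox G hab ω)
    have h2 := (ENNReal.tendsto_toReal (@ENNReal.ofReal_ne_top (g ω))).comp h1
    simp only [hψ_apply]
    simpa [hG, ENNReal.toReal_ofReal (hg0 ω), Function.comp_def] using h2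
  -- limit of integrals
  have hlim : Filter.Tendsto (fun n => ∫⁻ ω, ENNReal.ofReal (Real.exp (-ψ n ω)) ∂μ)
      Filter.atTop (nhds (∫⁻ ω, ENNReal.ofReal (Real.exp (-g ω)) ∂μ)) := by
    refine @tendsto_lintegral_of_dominated_convergence Ω mΩ μ _ _ (fun _ => 1) ?_ ?_ ?_ ?_
    · intro n
      have : Measurable[F] fun ω => ENNReal.ofReal (Real.exp (-ψ n ω)) := by
        exact ENNReal.measurable_ofReal.comp
          ((Real.measurable_exp.comp measurable_neg).comp ((ψ n).measurable))
      exact this.mono hF le_rfl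
    · intro n
      refine Filter.Eventually.of_forall fun ω => ?_
      calc ENNReal.ofReal (Real.exp (-ψ n ω)) ≤ ENNReal.ofReal (Real.exp 0) := by
            refine ENNReal.ofReal_le_ofReal (Real.exp_le_exp.2 ?_)
            simpa using hψ0 n ω
        _ = 1 := by simp
    · simp
    · refine Filter.Eventually.of_forall fun ω => ?_
      have := htendsto ω
      exact (ENNReal.continuous_ofReal.tendsto _).comp
        ((Real.continuous_exp.tendsto _).comp (this.neg))
  refine ge_of_tendsto hlim (Filter.Eventually.of_forall fun n => ?_)
  have hsub : {ω | g ω ≤ X ω} ⊆ {ω | ψ n ω ≤ X ω} :=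
    fun ω hω => le_trans (hψle n ω) hω
  have h1 : μ {ω | g ω ≤ X ω} ≤ μ {ω | ψ n ω ≤ X ω} := by
    exact measure_mono hsub
  have h2 := @aux_simple Ω mΩ μ _ F hF X hcond (ψ n) (hψ0 n)
  exact le_trans h1 h2

end Aux

section Layer

lemma inter_Iic_Ioc {s c : ℝ} (hs : 0 ≤ s) :
    Set.Iic s ∩ Set.Ioc 0 c = Set.Ioc 0 (min s c) := by
  ext t
  simp only [Set.mem_inter_iff, Set.mem_Iic, Set.mem_Ioc, le_min_iff]
  tauto

lemma lint_exp_Ioc (c d : ℝ) (hd : 0 ≤ d) :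
    ∫⁻ t in Set.Ioc 0 d, ENNReal.ofReal (Real.exp (-(c - t)))
      = ENNReal.ofReal (Real.exp (d - c) - Real.exp (-c)) := by
  have hcont : Continuous fun t : ℝ => Real.exp (-(c - t)) := by continuity
  have hint : IntegrableOn (fun t : ℝ => Real.exp (-(c - t))) (Set.Ioc 0 d) volume :=
    hcont.integrableOn_Ioc
  rw [← ofReal_integral_eq_lintegral_ofReal hint
    (Filter.Eventually.of_forall fun t => (Real.exp_pos _).le)]
  congr 1
  rw [← intervalIntegral.integral_of_le hd]
  have heq : ∀ t : ℝ, Real.exp (-(c - t)) = Real.exp (t - c) := by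
    intro t; congr 1; ring
  simp_rw [heq]
  rw [intervalIntegral.integral_comp_sub_right (fun x => Real.exp x) c, integral_exp]
  norm_num

lemma layer_pointwise (c s : ℝ) (hc : 0 < c) (hs : 0 ≤ s) :
    ENNReal.ofReal (Real.exp (-(max (c - s) 0)))
      = ENNReal.ofReal (Real.exp (-c))
        + ∫⁻ t in Set.Ioc 0 c,
            Set.indicator (Set.Iic s) (fun t => ENNReal.ofReal (Real.exp (-(c - t)))) t := by
  have h1 : ∫⁻ t in Set.Ioc 0 c,
      Set.indicator (Set.Iic s) (fun t => ENNReal.ofReal (Real.exp (-(c - t)))) t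
      = ∫⁻ t in Set.Ioc 0 (min s c), ENNReal.ofReal (Real.exp (-(c - t))) := by
    rw [lintegral_indicator measurableSet_Iic, Measure.restrict_restrict measurableSet_Iic,
      inter_Iic_Ioc hs]
  rw [h1, lint_exp_Ioc c (min s c) (le_min hs hc.le)]
  have hmax : -(max (c - s) 0) = min s c - c := by
    rcases le_total s c with h | h
    · rw [min_eq_left h, max_eq_left (by linarith)]; ring
    · rw [min_eq_right h, max_eq_right (by linarith)]; ring
  rw [hmax, ← ENNReal.ofReal_add (Real.exp_pos _).le
    (by
      have : Real.exp (-c) ≤ Real.exp (min s c - c) :=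
        Real.exp_le_exp.2 (by have := le_min hs hc.le; linarith)
      linarith)]
  congr 1
  ring

end Layer

section Tonelli

variable {Ω : Type*} [mΩ : MeasurableSpace Ω] {μ : Measure Ω} [IsProbabilityMeasure μ]

lemma tonelli_bound (S : Ω → ℝ) (hS : Measurable S) (hS0 : ∀ ω, 0 ≤ S ω)
    (c : ℝ) (hc : 0 < c) :
    ∫⁻ ω, ENNReal.ofReal (Real.exp (-(max (c - S ω) 0))) ∂μ
      = ENNReal.ofReal (Real.exp (-c))
        + ∫⁻ t in Set.Ioc 0 c,
            ENNReal.ofReal (Real.exp (-(c - t))) * μ {ω | t ≤ S ω} := by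
  have hpt : ∀ ω, ENNReal.ofReal (Real.exp (-(max (c - S ω) 0)))
      = ENNReal.ofReal (Real.exp (-c))
        + ∫⁻ t in Set.Ioc 0 c,
            Set.indicator (Set.Iic (S ω)) (fun t => ENNReal.ofReal (Real.exp (-(c - t)))) t :=
    fun ω => layer_pointwise c (S ω) hc (hS0 ω)
  calc ∫⁻ ω, ENNReal.ofReal (Real.exp (-(max (c - S ω) 0))) ∂μ
      = ∫⁻ ω, (ENNReal.ofReal (Real.exp (-c))
        + ∫⁻ t in Set.Ioc 0 c,
            Set.indicator (Set.Iic (S ω)) (fun t => ENNReal.ofReal (Real.exp (-(c - t)))) t) ∂μ :=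
        lintegral_congr hpt
    _ = ENNReal.ofReal (Real.exp (-c))
        + ∫⁻ ω, (∫⁻ t in Set.Ioc 0 c,
            Set.indicator (Set.Iic (S ω)) (fun t => ENNReal.ofReal (Real.exp (-(c - t)))) t) ∂μ := by
        rw [lintegral_add_left measurable_const, lintegral_const, measure_univ, mul_one]
    _ = ENNReal.ofReal (Real.exp (-c))
        + ∫⁻ t in Set.Ioc 0 c, (∫⁻ ω,
            Set.indicator (Set.Iic (S ω)) (fun t => ENNReal.ofReal (Real.exp (-(c - t)))) t ∂μ) := by
        congr 1
        refine lintegral_lintegral_swap ?_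
        have huncurry : (Function.uncurry fun ω t =>
            Set.indicator (Set.Iic (S ω)) (fun t => ENNReal.ofReal (Real.exp (-(c - t)))) t)
            = Set.indicator {p : Ω × ℝ | p.2 ≤ S p.1}
                (fun p => ENNReal.ofReal (Real.exp (-(c - p.2)))) := by
          funext p
          simp [Function.uncurry, Set.indicator_apply, Set.mem_Iic, Set.mem_setOf_eq]
        rw [huncurry]
        refine Measurable.aemeasurable ?_
        refine Measurable.indicator ?_ ?_
        · exact ENNReal.measurable_ofReal.comp
            ((Real.measurable_exp.comp (measurable_const.sub measurable_snd).neg))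
        · exact measurableSet_le measurable_snd (hS.comp measurable_fst)
    _ = ENNReal.ofReal (Real.exp (-c))
        + ∫⁻ t in Set.Ioc 0 c,
            ENNReal.ofReal (Real.exp (-(c - t))) * μ {ω | t ≤ S ω} := by
        congr 1
        refine lintegral_congr fun t => ?_
        have hpt2 : ∀ ω : Ω,
            Set.indicator (Set.Iic (S ω)) (fun t => ENNReal.ofReal (Real.exp (-(c - t)))) t
            = Set.indicator {ω : Ω | t ≤ S ω}
                (fun _ => ENNReal.ofReal (Real.exp (-(c - t)))) ω := by
          intro ω
          simp [Set.indicator_apply, Set.mem_Iic, Set.mem_setOf_eq]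
        rw [lintegral_congr hpt2, lintegral_indicator_const (measurableSet_le measurable_const hS)]

end Tonelli

section Calc

lemma calc_integral (c : ℝ) (hc : 0 < c) (k : ℕ) :
    ∫⁻ t in Set.Ioc 0 c, ENNReal.ofReal (Real.exp (-(c - t)))
        * ENNReal.ofReal (Real.exp (-t) * ∑ i ∈ range k, t ^ i / i.factorial)
      = ENNReal.ofReal (Real.exp (-c) * ∑ i ∈ range k, c ^ (i + 1) / (i + 1).factorial) := by
  have hP : ∀ t : ℝ, 0 ≤ t → 0 ≤ ∑ i ∈ range k, t ^ i / (i.factorial : ℝ) := by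
    intro t ht
    refine Finset.sum_nonneg fun i _ => ?_
    positivity
  have hpt : ∀ t : ℝ, ENNReal.ofReal (Real.exp (-(c - t)))
      * ENNReal.ofReal (Real.exp (-t) * ∑ i ∈ range k, t ^ i / i.factorial)
      = ENNReal.ofReal (Real.exp (-(c - t))
          * (Real.exp (-t) * ∑ i ∈ range k, t ^ i / i.factorial)) := by
    intro t
    rw [← ENNReal.ofReal_mul (Real.exp_pos _).le]
  have hsimp : ∀ t : ℝ, Real.exp (-(c - t)) * (Real.exp (-t) * ∑ i ∈ range k, t ^ i / i.factorial)
      = Real.exp (-c) * ∑ i ∈ range k, t ^ i / i.factorial := by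
    intro t
    rw [← mul_assoc, ← Real.exp_add]
    congr 2
    ring
  simp_rw [hpt, hsimp]
  have hcont : Continuous fun t : ℝ => Real.exp (-c) * ∑ i ∈ range k, t ^ i / (i.factorial : ℝ) := by
    refine continuous_const.mul ?_
    exact continuous_finset_sum _ fun i _ => (continuous_pow i).div_const _
  have hint : IntegrableOn (fun t : ℝ => Real.exp (-c) * ∑ i ∈ range k, t ^ i / (i.factorial : ℝ))
      (Set.Ioc 0 c) volume := hcont.integrableOn_Ioc
  rw [← ofReal_integral_eq_lintegral_ofReal hint ?_]
  · congr 1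
    rw [← intervalIntegral.integral_of_le hc.le, intervalIntegral.integral_const_mul]
    congr 1
    rw [intervalIntegral.integral_finset_sum]
    · refine Finset.sum_congr rfl fun i _ => ?_
      rw [intervalIntegral.integral_div, integral_pow]
      rw [Nat.factorial_succ]
      push_cast
      rw [zero_pow (Nat.succ_ne_zero i)]
      have h1 : (0:ℝ) < (i.factorial : ℝ) := by positivity
      field_simp
      simp
    · intro i _
      exact ((continuous_pow i).div_const _).intervalIntegrable _ _
  · refine (ae_restrict_iff' measurableSet_Ioc).2 (Filter.Eventually.of_forall fun t ht => ?_)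
    exact mul_nonneg (Real.exp_pos _).le (hP t ht.1.le)

end Calc

section Step

variable {Ω : Type*} [mΩ : MeasurableSpace Ω] {μ : Measure Ω} [IsProbabilityMeasure μ]

/-- One step of the induction: adding one exponentially-dominated variable. -/
lemma step_bound (F : MeasurableSpace Ω) (hF : F ≤ mΩ) (X S : Ω → ℝ)
    (hX0 : ∀ ω, 0 ≤ X ω) (hS : Measurable[mΩ] S) (hS0 : ∀ ω, 0 ≤ S ω)
    (hSF : Measurable[F] S)
    (hcond : ∀ c : ℝ, 0 ≤ c → ∀ A : Set Ω, MeasurableSet[F] A →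
      μ ({ω | c ≤ X ω} ∩ A) ≤ ENNReal.ofReal (Real.exp (-c)) * μ A)
    (k : ℕ)
    (ih : ∀ t : ℝ, 0 < t →
      μ {ω | t ≤ S ω} ≤ ENNReal.ofReal (Real.exp (-t) * ∑ i ∈ range k, t ^ i / i.factorial))
    (c : ℝ) (hc : 0 < c) :
    μ {ω | c ≤ S ω + X ω}
      ≤ ENNReal.ofReal (Real.exp (-c) * ∑ i ∈ range (k + 1), c ^ i / i.factorial) := by
  set g : Ω → ℝ := fun ω => max (c - S ω) 0 with hg
  have hgF : Measurable[F] g := (measurable_const.sub hSF).max measurable_const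
  have hg0 : ∀ ω, 0 ≤ g ω := fun ω => le_max_right _ _
  have hset : {ω | c ≤ S ω + X ω} = {ω | g ω ≤ X ω} := by
    ext ω
    simp only [Set.mem_setOf_eq, hg]
    constructor
    · intro h
      exact max_le (by linarith) (hX0 ω)
    · intro h
      have := le_trans (le_max_left (c - S ω) 0) h
      linarith
  calc μ {ω | c ≤ S ω + X ω} = μ {ω | g ω ≤ X ω} := by rw [hset]
    _ ≤ ∫⁻ ω, ENNReal.ofReal (Real.exp (-g ω)) ∂μ :=
        @aux_meas Ω mΩ μ _ F hF X hcond g hgF hg0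
    _ = ENNReal.ofReal (Real.exp (-c))
        + ∫⁻ t in Set.Ioc 0 c,
            ENNReal.ofReal (Real.exp (-(c - t))) * μ {ω | t ≤ S ω} :=
        @tonelli_bound Ω mΩ μ _ S hS hS0 c hc
    _ ≤ ENNReal.ofReal (Real.exp (-c))
        + ∫⁻ t in Set.Ioc 0 c, ENNReal.ofReal (Real.exp (-(c - t)))
            * ENNReal.ofReal (Real.exp (-t) * ∑ i ∈ range k, t ^ i / i.factorial) := by
        refine add_le_add_right ?_ _
        refine lintegral_mono_ae ?_
        refine (ae_restrict_iff' measurableSet_Ioc).2 (Filter.Eventually.of_forall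
          fun t ht => ?_)
        exact mul_le_mul_right (ih t ht.1) _
    _ = ENNReal.ofReal (Real.exp (-c))
        + ENNReal.ofReal (Real.exp (-c) * ∑ i ∈ range k, c ^ (i + 1) / (i + 1).factorial) := by
        rw [calc_integral c hc k]
    _ = ENNReal.ofReal (Real.exp (-c) * ∑ i ∈ range (k + 1), c ^ i / i.factorial) := by
        rw [← ENNReal.ofReal_add (Real.exp_pos _).le]
        · congr 1
          rw [Finset.sum_range_succ']
          simp only [pow_zero, Nat.factorial_zero, Nat.cast_one]
          ring
        · refine mul_nonneg (Real.exp_pos _).le (Finset.sum_nonneg fun i _ => ?_)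
          positivity

end Step

/-- if each nonnegative `L j` satisfies the conditional tail bound
`P(L j ≥ c | L 0, ..., L (j-1)) ≤ e^{-c}` (expressed as
`μ({L j ≥ c} ∩ A) ≤ e^{-c} μ(A)` for every event `A` measurable w.r.t. the
σ-algebra generated by `L 0, ..., L (j-1)`), then the sum satisfies the
Erlang tail bound `P(∑ L j ≥ c) ≤ e^{-c} ∑_{i=0}^{m-1} c^i / i!`. -/
theorem conditional_exponential_domination_erlang_tail
    {Ω : Type*} [mΩ : MeasurableSpace Ω] (μ : Measure Ω) [IsProbabilityMeasure μ]
    {m : ℕ} (L : Fin m → Ω → ℝ)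
    (hmeas : ∀ j, Measurable (L j))
    (hnonneg : ∀ j ω, 0 ≤ L j ω)
    (hcond : ∀ j : Fin m, ∀ c : ℝ, 0 ≤ c → ∀ A : Set Ω,
      MeasurableSet[⨆ i : {i : Fin m // (i : ℕ) < (j : ℕ)},
        MeasurableSpace.comap (L i) (borel ℝ)] A →
      μ ({ω | c ≤ L j ω} ∩ A) ≤ ENNReal.ofReal (Real.exp (-c)) * μ A) :
    ∀ c : ℝ, 0 < c →
      μ {ω | c ≤ ∑ j, L j ω}
        ≤ ENNReal.ofReal (Real.exp (-c) * ∑ i ∈ range m, c ^ i / i.factorial) := by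
  classical
  set Sk : ℕ → Ω → ℝ :=
    fun k ω => ∑ i ∈ univ.filter (fun i : Fin m => (i : ℕ) < k), L i ω with hSk
  have hSkmeas : ∀ k, Measurable (Sk k) :=
    fun k => Finset.measurable_sum _ fun i _ => hmeas i
  have hSk0 : ∀ k ω, 0 ≤ Sk k ω :=
    fun k ω => Finset.sum_nonneg fun i _ => hnonneg i ω
  have hborel : (borel ℝ) = Real.measurableSpace := BorelSpace.measurable_eq.symm
  have key : ∀ k : ℕ, ∀ c : ℝ, 0 < c →
      μ {ω | c ≤ Sk k ω}
        ≤ ENNReal.ofReal (Real.exp (-c) * ∑ i ∈ range k, c ^ i / i.factorial) := by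
    intro k
    induction k with
    | zero =>
      intro c hc
      have hempty : {ω | c ≤ Sk 0 ω} = (∅ : Set Ω) := by
        ext ω
        simp only [hSk, Set.mem_setOf_eq, Set.mem_empty_iff_false, iff_false, not_le]
        have h0 : (univ.filter (fun i : Fin m => (i : ℕ) < 0)) = ∅ := by
          ext i; simp
        rw [h0]
        simpa using hc
      rw [hempty]
      simp
    | succ k ih =>
      intro c hc
      by_cases hk : k < m
      · -- main case
        have j : Fin m := ⟨k, hk⟩
        have hins : (univ.filter (fun i : Fin m => (i : ℕ) < k + 1))
            = insert (⟨k, hk⟩ : Fin m) (univ.filter (fun i : Fin m => (i : ℕ) < k)) := by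
          ext i
          simp only [mem_filter, mem_univ, true_and, mem_insert, Nat.lt_succ_iff_lt_or_eq]
          rw [Fin.ext_iff]
          tauto
        have hjnot : (⟨k, hk⟩ : Fin m) ∉ univ.filter (fun i : Fin m => (i : ℕ) < k) := by
          simp
        have hsum : ∀ ω, Sk (k + 1) ω = Sk k ω + L ⟨k, hk⟩ ω := by
          intro ω
          simp only [hSk]
          rw [hins, Finset.sum_insert hjnot]
          ring
        have hseteq : {ω | c ≤ Sk (k + 1) ω} = {ω | c ≤ Sk k ω + L ⟨k, hk⟩ ω} := by
          ext ω; simp only [Set.mem_setOf_eq, hsum ω]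
        rw [hseteq]
        refine @step_bound Ω mΩ μ _
          (⨆ i : {i : Fin m // (i : ℕ) < ((⟨k, hk⟩ : Fin m) : ℕ)},
            MeasurableSpace.comap (L i) (borel ℝ)) ?_ (L ⟨k, hk⟩) (Sk k)
          (hnonneg _) (hSkmeas k) (hSk0 k) ?_ (hcond ⟨k, hk⟩) k ih c hc
        · refine iSup_le fun i => ?_
          rw [hborel]
          exact measurable_iff_comap_le.1 (hmeas i)
        · refine Finset.measurable_sum _ fun i hi => ?_
          refine measurable_iff_comap_le.2 ?_
          rw [← hborel]
          exact le_iSup (fun i : {i : Fin m // (i : ℕ) < ((⟨k, hk⟩ : Fin m) : ℕ)} =>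
            MeasurableSpace.comap (L i) (borel ℝ)) ⟨i, by simpa using hi⟩
      · -- k ≥ m : the sum does not grow
        have hfil : (univ.filter (fun i : Fin m => (i : ℕ) < k + 1))
            = (univ.filter (fun i : Fin m => (i : ℕ) < k)) := by
          ext i
          simp only [mem_filter, mem_univ, true_and]
          have := i.isLt
          omega
        have hSeq : Sk (k + 1) = Sk k := by
          funext ω
          simp only [hSk]
          rw [hfil]
        rw [hSeq]
        refine le_trans (ih c hc) (ENNReal.ofReal_le_ofReal ?_)
        refine mul_le_mul_of_nonneg_left ?_ (Real.exp_pos _).le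
        refine Finset.sum_le_sum_of_subset_of_nonneg
          (Finset.range_subset_range.2 (Nat.le_succ k)) fun i _ _ => ?_
        positivity
  intro c hc
  have hfull : {ω | c ≤ ∑ j, L j ω} = {ω | c ≤ Sk m ω} := by
    have huniv : (univ.filter (fun i : Fin m => (i : ℕ) < m)) = univ := by
      ext i; simp [i.isLt]
    ext ω
    simp only [Set.mem_setOf_eq, hSk, huniv]
  rw [hfull]
  exact key m c hc
end

section
/- Let X and Y be binary variables with joint distribution p, where X is an unconfounded cause of Y, and assume monotonicity so that the probability of necessity equals PN = (p(y¹|x¹) - p(y¹|x⁰)) / p(y¹|x¹). Assume 0 < p(y¹) < 1, 0 < p(y¹|x¹) ≤ 1, and p(y¹|x⁰) ≤ p(y¹). Define the explanation score E = 1 - log p(y¹|x¹) / log p(y¹). Then PN ≥ 1 - p(y¹)^E. -/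
/-- probability of necessity and explanation score.
With `py = p(y¹) ∈ (0,1)`, `pyx1 = p(y¹|x¹) ∈ (0,1]`, `pyx0 = p(y¹|x⁰) ≤ py`
(monotonicity/unconfoundedness), `PN = (pyx1 - pyx0)/pyx1` and the explanation
score `E = 1 - log pyx1 / log py`, we have `PN ≥ 1 - py ^ E`. -/
theorem PN_ge_one_sub_rpow (py pyx1 pyx0 : ℝ)
    (hpy0 : 0 < py) (hpy1 : py < 1)
    (hpyx1_0 : 0 < pyx1) (hpyx1_1 : pyx1 ≤ 1)
    (hpyx0_0 : 0 ≤ pyx0) (hmono : pyx0 ≤ py) :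
    (pyx1 - pyx0) / pyx1 ≥ 1 - py ^ (1 - Real.log pyx1 / Real.log py) := by
  have hlog : Real.log py ≠ 0 := ne_of_lt (Real.log_neg hpy0 hpy1)
  have hkey : py ^ (1 - Real.log pyx1 / Real.log py) = py / pyx1 := by
    rw [Real.rpow_def_of_pos hpy0]
    have : Real.log py * (1 - Real.log pyx1 / Real.log py)
        = Real.log py - Real.log pyx1 := by field_simp
    rw [this, Real.exp_sub, Real.exp_log hpy0, Real.exp_log hpyx1_0]
  rw [hkey]
  rw [ge_iff_le, sub_div, div_self (ne_of_gt hpyx1_0)]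
  gcongr
end

section
/- Let X, Y, Z be binary variables. Define p(z^k | do(y^j)) = sum_i p(z^k | x^i, y^j) p(x^i) and p(z^k | y^j) = sum_i p(z^k | x^i, y^j) p(x^i | y^j), with all terms positive. Then |log(p(z^k | y^j) / p(z^k | do(y^j)))| ≤ min( max_i |log(p(x^i | y^j)/p(x^i))|, |log(p(z^k | x^1, y^j)/p(z^k | x^0, y^j))| ). -/
open Finset

private lemma log_max_le_max_abs (r0 r1 : ℝ) :
    Real.log (max r0 r1) ≤ max |Real.log r0| |Real.log r1| := by
  rcases le_total r0 r1 with h | h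
  · rw [max_eq_right h]; exact le_trans (le_abs_self _) (le_max_right _ _)
  · rw [max_eq_left h]; exact le_trans (le_abs_self _) (le_max_left _ _)

private lemma mediant_log_le (c0 c1 a0 a1 b0 b1 : ℝ)
    (hc0 : 0 < c0) (hc1 : 0 < c1) (ha0 : 0 < a0) (ha1 : 0 < a1)
    (hb0 : 0 < b0) (hb1 : 0 < b1) :
    Real.log ((c0*a0+c1*a1)/(c0*b0+c1*b1)) ≤ max |Real.log (a0/b0)| |Real.log (a1/b1)| := by
  have hQ : 0 < c0*b0+c1*b1 := by positivity
  have hP : 0 < c0*a0+c1*a1 := by positivity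
  have h0 : a0 ≤ max (a0/b0) (a1/b1) * b0 := by
    have := le_max_left (a0/b0) (a1/b1)
    calc a0 = (a0/b0) * b0 := by field_simp
    _ ≤ max (a0/b0) (a1/b1) * b0 := by nlinarith
  have h1 : a1 ≤ max (a0/b0) (a1/b1) * b1 := by
    have := le_max_right (a0/b0) (a1/b1)
    calc a1 = (a1/b1) * b1 := by field_simp
    _ ≤ max (a0/b0) (a1/b1) * b1 := by nlinarith
  have hle : (c0*a0+c1*a1)/(c0*b0+c1*b1) ≤ max (a0/b0) (a1/b1) := by
    rw [div_le_iff₀ hQ]; nlinarith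
  calc Real.log ((c0*a0+c1*a1)/(c0*b0+c1*b1)) ≤ Real.log (max (a0/b0) (a1/b1)) :=
        Real.log_le_log (by positivity) hle
  _ ≤ max |Real.log (a0/b0)| |Real.log (a1/b1)| := log_max_le_max_abs _ _

private lemma convex_log_le (c0 c1 a0 a1 b0 b1 : ℝ)
    (hc0 : 0 < c0) (hc1 : 0 < c1) (ha0 : 0 < a0) (ha1 : 0 < a1)
    (hb0 : 0 < b0) (hb1 : 0 < b1) (ha : a0 + a1 = 1) (hb : b0 + b1 = 1) :
    Real.log ((c0*a0+c1*a1)/(c0*b0+c1*b1)) ≤ |Real.log (c1/c0)| := by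
  have hQ : 0 < c0*b0+c1*b1 := by positivity
  have hP : 0 < c0*a0+c1*a1 := by positivity
  rcases le_total c0 c1 with h | h
  · have hle : (c0*a0+c1*a1)/(c0*b0+c1*b1) ≤ c1/c0 := by
      rw [div_le_div_iff₀ hQ hc0]
      have hPle : c0*a0+c1*a1 ≤ c1 := by nlinarith
      have hQge : c0 ≤ c0*b0+c1*b1 := by nlinarith
      nlinarith [mul_le_mul_of_nonneg_right hPle hc0.le,
        mul_le_mul_of_nonneg_left hQge hc1.le]
    calc Real.log ((c0*a0+c1*a1)/(c0*b0+c1*b1)) ≤ Real.log (c1/c0) :=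
          Real.log_le_log (by positivity) hle
    _ ≤ _ := le_abs_self _
  · have hle : (c0*a0+c1*a1)/(c0*b0+c1*b1) ≤ c0/c1 := by
      rw [div_le_div_iff₀ hQ hc1]
      have hPle : c0*a0+c1*a1 ≤ c0 := by nlinarith
      have hQge : c1 ≤ c0*b0+c1*b1 := by nlinarith
      nlinarith [mul_le_mul_of_nonneg_right hPle hc1.le,
        mul_le_mul_of_nonneg_left hQge hc0.le]
    calc Real.log ((c0*a0+c1*a1)/(c0*b0+c1*b1)) ≤ Real.log (c0/c1) :=
          Real.log_le_log (by positivity) hle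
    _ = -Real.log (c1/c0) := by
        rw [← Real.log_inv]; congr 1; field_simp
    _ ≤ _ := neg_le_abs _

/-- ignoring the confounder.
With `c i j k = p(z^k | x^i, y^j)`, `px i = p(x^i)`, `pxy i j = p(x^i | y^j)`,
`pdo j k = ∑ i, c i j k * px i` and `pobs j k = ∑ i, c i j k * pxy i j`,
the log-ratio `|log (pobs / pdo)|` is bounded by the minimum of the maximal
contribution `max_i |log (pxy i j / px i)|` and the controlled direct
contribution difference `|log (c 1 j k / c 0 j k)|`. -/
theorem ignoring_confounder_bound
    (c : Fin 2 → Fin 2 → Fin 2 → ℝ) (px : Fin 2 → ℝ) (pxy : Fin 2 → Fin 2 → ℝ)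
    (hc : ∀ i j k, 0 < c i j k)
    (hpx : ∀ i, 0 < px i) (hpx1 : ∑ i, px i = 1)
    (hpxy : ∀ i j, 0 < pxy i j) (hpxy1 : ∀ j, ∑ i, pxy i j = 1) :
    ∀ j k,
      |Real.log ((∑ i, c i j k * pxy i j) / ∑ i, c i j k * px i)|
        ≤ min (max |Real.log (pxy 0 j / px 0)| |Real.log (pxy 1 j / px 1)|)
              |Real.log (c 1 j k / c 0 j k)| := by
  intro j k
  have hsa : ∑ i, c i j k * pxy i j = c 0 j k * pxy 0 j + c 1 j k * pxy 1 j :=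
    Fin.sum_univ_two _
  have hsb : ∑ i, c i j k * px i = c 0 j k * px 0 + c 1 j k * px 1 :=
    Fin.sum_univ_two _
  have ha1 : pxy 0 j + pxy 1 j = 1 := by have := hpxy1 j; rwa [Fin.sum_univ_two] at this
  have hb1 : px 0 + px 1 = 1 := by rwa [Fin.sum_univ_two] at hpx1
  rw [hsa, hsb]
  have hP : 0 < c 0 j k * pxy 0 j + c 1 j k * pxy 1 j := by
    have := hc 0 j k; have := hc 1 j k; have := hpxy 0 j; have := hpxy 1 j; positivity
  have hQ : 0 < c 0 j k * px 0 + c 1 j k * px 1 := by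
    have := hc 0 j k; have := hc 1 j k; have := hpx 0; have := hpx 1; positivity
  have habs : ∀ x : ℝ, 0 < x →
      Real.log ((c 0 j k * px 0 + c 1 j k * px 1) / (c 0 j k * pxy 0 j + c 1 j k * pxy 1 j))
      = -Real.log ((c 0 j k * pxy 0 j + c 1 j k * pxy 1 j) / (c 0 j k * px 0 + c 1 j k * px 1)) := by
    intro x hx
    rw [← Real.log_inv]; congr 1; field_simp
  rw [abs_le]
  have h1 := mediant_log_le (c 0 j k) (c 1 j k) (pxy 0 j) (pxy 1 j) (px 0) (px 1)
    (hc 0 j k) (hc 1 j k) (hpxy 0 j) (hpxy 1 j) (hpx 0) (hpx 1)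
  have h1' := mediant_log_le (c 0 j k) (c 1 j k) (px 0) (px 1) (pxy 0 j) (pxy 1 j)
    (hc 0 j k) (hc 1 j k) (hpx 0) (hpx 1) (hpxy 0 j) (hpxy 1 j)
  have h2 := convex_log_le (c 0 j k) (c 1 j k) (pxy 0 j) (pxy 1 j) (px 0) (px 1)
    (hc 0 j k) (hc 1 j k) (hpxy 0 j) (hpxy 1 j) (hpx 0) (hpx 1) ha1 hb1
  have h2' := convex_log_le (c 0 j k) (c 1 j k) (px 0) (px 1) (pxy 0 j) (pxy 1 j)
    (hc 0 j k) (hc 1 j k) (hpx 0) (hpx 1) (hpxy 0 j) (hpxy 1 j) hb1 ha1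
  rw [habs 1 one_pos] at h1' h2'
  have e0 : |Real.log (px 0 / pxy 0 j)| = |Real.log (pxy 0 j / px 0)| := by
    have : Real.log (px 0 / pxy 0 j) = -Real.log (pxy 0 j / px 0) := by
      rw [← Real.log_inv]; congr 1; field_simp
    rw [this, abs_neg]
  have e1 : |Real.log (px 1 / pxy 1 j)| = |Real.log (pxy 1 j / px 1)| := by
    have : Real.log (px 1 / pxy 1 j) = -Real.log (pxy 1 j / px 1) := by
      rw [← Real.log_inv]; congr 1; field_simp
    rw [this, abs_neg]
  rw [e0, e1] at h1'
  constructor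
  · exact neg_le.mpr (le_min h1' h2')
  · exact le_min h1 h2
end

section
/- Consider the chain B_1 → B_2 → B_3 of binary variables with structural equations B_1 = N_1, B_2 = B_1 AND N_2, B_3 = B_2 OR N_3, where N_1, N_2, N_3 are independent binaries with P(N_1=1) = q_1 and P(N_2=1) = P(N_3=1) = q_2, with 0 < q_1, q_2 < 1. Then: (a) P(B_3=1 | B_2=1) = 1; (b) P(B_2=1 | B_1=1) = q_2; (c) P(B_3=1) = q_1 q_2 + (1 - q_1 q_2) q_2; and (d) the pathway explanation score 1 - log(P(B_3=1|B_2=1) P(B_2=1|B_1=1)) / log P(B_3=1) = 1 - log q_2 / log(q_1 q_2 + (1 - q_1 q_2) q_2) is negative if and only if P(B_3=1|B_2=1)·P(B_2=1|B_1=1) < P(B_3=1), i.e., q_2 < q_2(1 + q_1 - q_1 q_2), which always holds for q_1, q_2 ∈ (0,1); hence the score is always negative. -/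
open Finset

/-- The distribution of the independent noise variables `N₁, N₂, N₃` with
`P(N₁=1)=q₁` and `P(N₂=1)=P(N₃=1)=q₂`.  The structural equations are
`B₁ = N₁`, `B₂ = B₁ ∧ N₂`, `B₃ = B₂ ∨ N₃`. -/
noncomputable def noisePmf (q1 q2 : ℝ) (n1 n2 n3 : Bool) : ℝ :=
  (if n1 then q1 else 1 - q1) * (if n2 then q2 else 1 - q2) *
    (if n3 then q2 else 1 - q2)

/-- OR/AND-gate chain `B₁ → B₂ → B₃`.
(a) `P(B₃=1 | B₂=1) = 1`; (b) `P(B₂=1 | B₁=1) = q₂`;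
(c) `P(B₃=1) = q₁q₂ + (1 - q₁q₂)q₂`;
(d) the pathway explanation score
`1 - log q₂ / log (q₁q₂ + (1 - q₁q₂)q₂)` is negative. -/
theorem or_and_chain_example (q1 q2 : ℝ)
    (hq1 : q1 ∈ Set.Ioo (0:ℝ) 1) (hq2 : q2 ∈ Set.Ioo (0:ℝ) 1) :
    (∑ n1 : Bool, ∑ n2 : Bool, ∑ n3 : Bool,
        noisePmf q1 q2 n1 n2 n3 *
          (if ((n1 && n2) || n3) && (n1 && n2) then 1 else 0)) /
      (∑ n1 : Bool, ∑ n2 : Bool, ∑ n3 : Bool,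
        noisePmf q1 q2 n1 n2 n3 * (if n1 && n2 then 1 else 0)) = 1 ∧
    (∑ n1 : Bool, ∑ n2 : Bool, ∑ n3 : Bool,
        noisePmf q1 q2 n1 n2 n3 * (if (n1 && n2) && n1 then 1 else 0)) /
      (∑ n1 : Bool, ∑ n2 : Bool, ∑ n3 : Bool,
        noisePmf q1 q2 n1 n2 n3 * (if n1 then 1 else 0)) = q2 ∧
    (∑ n1 : Bool, ∑ n2 : Bool, ∑ n3 : Bool,
        noisePmf q1 q2 n1 n2 n3 * (if (n1 && n2) || n3 then 1 else 0))
      = q1 * q2 + (1 - q1 * q2) * q2 ∧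
    1 - Real.log q2 / Real.log (q1 * q2 + (1 - q1 * q2) * q2) < 0 := by
  obtain ⟨hq1a, hq1b⟩ := hq1
  obtain ⟨hq2a, hq2b⟩ := hq2
  have hq12 : q1 * q2 < 1 := by nlinarith
  have hP : q1 * q2 + (1 - q1 * q2) * q2 < 1 := by
    nlinarith [mul_pos (sub_pos.2 hq12) (sub_pos.2 hq2b)]
  have hPpos : 0 < q1 * q2 + (1 - q1 * q2) * q2 := by
    nlinarith [mul_pos (mul_pos hq1a hq2a) (sub_pos.2 hq2b)]
  have hgt : q2 < q1 * q2 + (1 - q1 * q2) * q2 := by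
    nlinarith [mul_pos (mul_pos hq1a hq2a) (sub_pos.2 hq2b)]
  refine ⟨?_, ?_, ?_, ?_⟩
  · simp [Fintype.sum_bool, noisePmf]
    apply ne_of_gt
    nlinarith [mul_pos hq1a hq2a]
  · simp [Fintype.sum_bool, noisePmf]
    rw [show q1 * q2 * q2 + q1 * q2 * (1 - q2) + (q1 * (1 - q2) * q2 + q1 * (1 - q2) * (1 - q2)) = q1 by ring,
        show q1 * q2 * q2 + q1 * q2 * (1 - q2) = q1 * q2 by ring]
    field_simp
  · simp [Fintype.sum_bool, noisePmf]
    ring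
  · have hlogP : Real.log (q1 * q2 + (1 - q1 * q2) * q2) < 0 :=
      Real.log_neg hPpos hP
    have hlogq : Real.log q2 < Real.log (q1 * q2 + (1 - q1 * q2) * q2) :=
      Real.log_lt_log hq2a hgt
    have : 1 < Real.log q2 / Real.log (q1 * q2 + (1 - q1 * q2) * q2) :=
      (one_lt_div_of_neg hlogP).mpr hlogq
    linarith
end
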